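/- Fix u₀ ∈ ℝ^n and let K^ε = (K_A^ε, K_B^ε) be the Lyapunov–Perron map and ρ(ε) := εL_f/(γ − εγ_A') + L_g/(γ_B − γ). Then K^ε maps C_γ^− into C_γ^−, and for every Φ ∈ C_γ^− one has ‖K^ε(Φ)‖_γ^− ≤ C₀ + ρ(ε)·‖Φ‖_γ^−, where C₀ := |u₀| + L_f C_f/γ_A' + L_g C_g/γ_B + ρ(ε)(‖η‖_γ^− + ‖ξ‖_γ^−). -/

import Mathlib

open MeasureTheory Set Filter

noncomputable section

/-- `ℝ^n` with the Euclidean norm. -/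
abbrev Vec (n : ℕ) := EuclideanSpace ℝ (Fin n)

/-- Action of an `n × n` real matrix on `ℝ^n`. -/
noncomputable def mApply {n : ℕ} (M : Matrix (Fin n) (Fin n) ℝ) (x : Vec n) : Vec n :=
  Matrix.toEuclideanLin M x

/-- The matrix exponential `e^{tA}`. -/
noncomputable def expM {n : ℕ} (A : Matrix (Fin n) (Fin n) ℝ) (t : ℝ) :
    Matrix (Fin n) (Fin n) ℝ :=
  NormedSpace.exp (t • A)

/-- The norm `‖u‖_γ^- = sup_{t ≤ 0} e^{γ t} ‖u t‖` on `C_γ^-`. -/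
noncomputable def cNorm {n : ℕ} (γ : ℝ) (u : ℝ → Vec n) : ℝ :=
  sSup ((fun t => Real.exp (γ * t) * ‖u t‖) '' Iic (0:ℝ))

/-- Membership in the Banach space `C_γ^-`: continuity on `(-∞, 0]` together with
finiteness of the norm `sup_{t ≤ 0} e^{γ t} ‖u t‖`. -/
def memCneg {n : ℕ} (γ : ℝ) (u : ℝ → Vec n) : Prop :=
  ContinuousOn u (Iic 0) ∧
    BddAbove ((fun t => Real.exp (γ * t) * ‖u t‖) '' Iic (0:ℝ))

/-- The `A`-component of the Lyapunov–Perron map: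
`K_A^ε(Φ)(t) = e^{εAt} u₀ + ε ∫_0^t e^{εA(t-s)} f(u(s)+η(s), v(s)+ξ(s)) ds`. -/
noncomputable def KA {n : ℕ} (A : Matrix (Fin n) (Fin n) ℝ) (ε : ℝ) (u₀ : Vec n)
    (f : Vec n → Vec n → Vec n) (η ξ u v : ℝ → Vec n) (t : ℝ) : Vec n :=
  mApply (expM A (ε * t)) u₀ +
    ε • ∫ s in (0:ℝ)..t, mApply (expM A (ε * (t - s))) (f (u s + η s) (v s + ξ s))

/-- The `B`-component of the Lyapunov–Perron map:
`K_B^ε(Φ)(t) = ∫_{-∞}^t e^{B(t-s)} g(u(s)+η(s), v(s)+ξ(s)) ds`. -/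
noncomputable def KB {n : ℕ} (B : Matrix (Fin n) (Fin n) ℝ)
    (g : Vec n → Vec n → Vec n) (η ξ u v : ℝ → Vec n) (t : ℝ) : Vec n :=
  ∫ s in Iic t, mApply (expM B (t - s)) (g (u s + η s) (v s + ξ s))


/-! The growth bounds on `f`, `g` and membership of `u, v, η, ξ` in `C_γ^-` give
`‖f(u s + η s, v s + ξ s)‖ ≤ L_f C_f + e^{-γ s} L_f M` with `M` the sum of the four weighted norms.
Integrating this against the decay of the kernels, `e^{-εγ_A' (t - s)}` on `[t, 0]` and
`e^{-γ_B (t - s)}` on `(-∞, t]`, and multiplying by `e^{γ t}` produces exactly the factors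
`1/γ_A'`, `ε/(γ - εγ_A')`, `1/γ_B` and `1/(γ_B - γ)`. For continuity, the semigroup law
`e^{A(t - s)} = e^{At} e^{-As}` turns each component into `e^{At}` applied to a primitive. -/

open Real

section MatrixExponential

variable {n : ℕ}

lemma mApply_eq_toEuclideanCLM (M : Matrix (Fin n) (Fin n) ℝ) (x : Vec n) :
    mApply M x = Matrix.toEuclideanCLM (𝕜 := ℝ) M x := rfl

lemma mApply_mul (M N : Matrix (Fin n) (Fin n) ℝ) (x : Vec n) :
    mApply (M * N) x = mApply M (mApply N x) := by
  rw [mApply_eq_toEuclideanCLM, map_mul]; rfl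

lemma mApply_add_smul (M : Matrix (Fin n) (Fin n) ℝ) (x y : Vec n) (c : ℝ) :
    mApply M (x + c • y) = mApply M x + c • mApply M y := by
  simp only [mApply, map_add, map_smul]

lemma mApply_intervalIntegral (M : Matrix (Fin n) (Fin n) ℝ) {h : ℝ → Vec n} {a b : ℝ}
    (hh : IntervalIntegrable h volume a b) :
    ∫ s in a..b, mApply M (h s) = mApply M (∫ s in a..b, h s) :=
  (Matrix.toEuclideanCLM (𝕜 := ℝ) M).intervalIntegral_comp_comm hh

lemma mApply_setIntegral (M : Matrix (Fin n) (Fin n) ℝ) {h : ℝ → Vec n} {s : Set ℝ}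
    (hh : IntegrableOn h s) :
    ∫ r in s, mApply M (h r) = mApply M (∫ r in s, h r) :=
  (Matrix.toEuclideanCLM (𝕜 := ℝ) M).integral_comp_comm hh

lemma continuous_mApply :
    Continuous fun p : Matrix (Fin n) (Fin n) ℝ × Vec n => mApply p.1 p.2 :=
  (PiLp.continuous_toLp 2 _).comp
    (continuous_fst.matrix_mulVec ((PiLp.continuous_ofLp 2 _).comp continuous_snd))

lemma ContinuousOn.mApply {α : Type*} [TopologicalSpace α] {M : α → Matrix (Fin n) (Fin n) ℝ}
    {x : α → Vec n} {s : Set α} (hM : ContinuousOn M s) (hx : ContinuousOn x s) :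
    ContinuousOn (fun a => mApply (M a) (x a)) s :=
  continuous_mApply.comp_continuousOn (f := fun a => (M a, x a)) (hM.prodMk hx)

lemma continuous_expM (A : Matrix (Fin n) (Fin n) ℝ) : Continuous (expM A) := by
  open scoped Matrix.Norms.Operator in
  exact NormedSpace.exp_continuous.comp (continuous_id.smul continuous_const)

lemma expM_add (A : Matrix (Fin n) (Fin n) ℝ) (s t : ℝ) :
    expM A (s + t) = expM A s * expM A t := by
  rw [expM, add_smul]
  exact Matrix.exp_add_of_commute _ _ ((Commute.refl A).smul_left s |>.smul_right t)

lemma mApply_expM_sub (A : Matrix (Fin n) (Fin n) ℝ) (t s : ℝ) (x : Vec n) :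
    mApply (expM A (t - s)) x = mApply (expM A t) (mApply (expM A (-s)) x) := by
  rw [sub_eq_add_neg, expM_add, mApply_mul]

end MatrixExponential

lemma ContinuousOn.continuousOn_primitive_Iic {E : Type*} [NormedAddCommGroup E]
    [NormedSpace ℝ E] {h : ℝ → E} {b : ℝ} (hh : ContinuousOn h (Iic b)) :
    ContinuousOn (fun t => ∫ s in b..t, h s) (Iic b) := by
  have hc : Continuous fun s => h (min s b) :=
    hh.comp_continuous (continuous_id.min continuous_const) fun s => min_le_right s b
  refine (intervalIntegral.continuous_primitive (fun _ _ => hc.intervalIntegrable _ _) b)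
    |>.continuousOn.congr fun t ht => intervalIntegral.integral_congr fun s hs => ?_
  rw [uIcc_of_ge ht] at hs
  simp only [min_eq_left hs.2]

lemma continuous_uncurry_of_norm_sub_le {E F : Type*} [SeminormedAddCommGroup E]
    [SeminormedAddCommGroup F] {f : E → E → F} {L : ℝ}
    (hf : ∀ x₁ y₁ x₂ y₂, ‖f x₁ y₁ - f x₂ y₂‖ ≤ L * (‖x₁ - x₂‖ + ‖y₁ - y₂‖)) :
    Continuous (Function.uncurry f) := by
  refine continuous_iff_continuousAt.2 fun p => tendsto_iff_norm_sub_tendsto_zero.2 <|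
    squeeze_zero (fun _ => norm_nonneg _) (fun q => hf q.1 q.2 p.1 p.2) ?_
  have : Continuous fun q : E × E => L * (‖q.1 - p.1‖ + ‖q.2 - p.2‖) := by fun_prop
  simpa using this.tendsto p

section DecayEstimates

variable {E : Type*} [NormedAddCommGroup E] [NormedSpace ℝ E] {P : ℝ → E} {γ C M t : ℝ}

lemma intervalIntegral_exp_mul_le_inv {c : ℝ} (hc : 0 < c) (ht : t ≤ 0) :
    ∫ s in t..0, exp (c * s) ≤ c⁻¹ := by
  calc ∫ s in t..0, exp (c * s) = ∫ s in Ioc t 0, exp (c * s) := intervalIntegral.integral_of_le ht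
    _ ≤ ∫ s in Iic 0, exp (c * s) :=
      setIntegral_mono_set (integrableOn_exp_mul_Iic hc 0) (ae_of_all _ fun _ => (exp_pos _).le)
        Ioc_subset_Iic_self.eventuallyLE
    _ = c⁻¹ := by simp [integral_exp_mul_Iic hc]

lemma exp_neg_mul_sub (c t r : ℝ) : exp (-c * (t - r)) = exp (-c * t) * exp (c * r) := by
  rw [← exp_add]; ring_nf

lemma integrableOn_exp_neg_mul_sub_Iic {c : ℝ} (hc : 0 < c) (t : ℝ) :
    IntegrableOn (fun r => exp (-c * (t - r))) (Iic t) := by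
  simp_rw [exp_neg_mul_sub]
  exact (integrableOn_exp_mul_Iic hc t).const_mul _

lemma integral_exp_neg_mul_sub_Iic {c : ℝ} (hc : 0 < c) (t : ℝ) :
    ∫ r in Iic t, exp (-c * (t - r)) = c⁻¹ := by
  simp_rw [exp_neg_mul_sub, integral_const_mul, integral_exp_mul_Iic hc, mul_div_assoc', ← exp_add]
  simp

lemma exp_mul_norm_intervalIntegral_le {a : ℝ} (ha : 0 < a) (haγ : a < γ) (hC : 0 ≤ C)
    (hM : 0 ≤ M) (ht : t ≤ 0)
    (hP : ∀ s ∈ Ioc t 0, ‖P s‖ ≤ exp (-a * (t - s)) * (C + exp (-(γ * s)) * M)) :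
    exp (γ * t) * ‖∫ s in t..0, P s‖ ≤ C / a + M / (γ - a) := by
  have hdom : ∀ s ∈ Ioc t 0,
      ‖exp (γ * t) • P s‖ ≤ C * exp (a * s) + M * exp ((γ - a) * (t - s)) := by
    intro s hs
    have e₁ : exp (γ * t) * exp (-a * (t - s)) = exp ((γ - a) * t + a * s) := by
      rw [← exp_add]; congr 1; ring
    have e₂ : exp (γ * t) * exp (-a * (t - s)) * exp (-(γ * s)) = exp ((γ - a) * (t - s)) := by
      rw [← exp_add, ← exp_add]; congr 1; ring
    have hta : (γ - a) * t ≤ 0 := mul_nonpos_of_nonneg_of_nonpos (by linarith) ht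
    calc ‖exp (γ * t) • P s‖ = exp (γ * t) * ‖P s‖ := by
          rw [norm_smul, norm_of_nonneg (exp_pos _).le]
      _ ≤ exp (γ * t) * (exp (-a * (t - s)) * (C + exp (-(γ * s)) * M)) := by
          gcongr; exact hP s hs
      _ = C * exp ((γ - a) * t + a * s) + M * exp ((γ - a) * (t - s)) := by
          linear_combination C * e₁ + M * e₂
      _ ≤ C * exp (a * s) + M * exp ((γ - a) * (t - s)) := by gcongr; linarith
  calc exp (γ * t) * ‖∫ s in t..0, P s‖ = ‖∫ s in t..0, exp (γ * t) • P s‖ := by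
        rw [intervalIntegral.integral_smul, norm_smul, norm_of_nonneg (exp_pos _).le]
    _ ≤ ∫ s in t..0, (C * exp (a * s) + M * exp ((γ - a) * (t - s))) :=
        intervalIntegral.norm_integral_le_of_norm_le ht (ae_of_all _ hdom)
          (Continuous.intervalIntegrable (by fun_prop) _ _)
    _ = C * (∫ s in t..0, exp (a * s)) + M * ∫ s in t..0, exp ((γ - a) * s) := by
        rw [intervalIntegral.integral_add (Continuous.intervalIntegrable (by fun_prop) _ _)
          (Continuous.intervalIntegrable (by fun_prop) _ _),
          intervalIntegral.integral_const_mul, intervalIntegral.integral_const_mul,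
          intervalIntegral.integral_comp_sub_left (fun x => exp ((γ - a) * x)) t]
        simp
    _ ≤ C * a⁻¹ + M * (γ - a)⁻¹ := by
        gcongr
        · exact intervalIntegral_exp_mul_le_inv ha ht
        · exact intervalIntegral_exp_mul_le_inv (by linarith) ht
    _ = C / a + M / (γ - a) := by ring

lemma integrableOn_exp_neg_mul_sub_add_Iic {b : ℝ} (hγ : 0 ≤ γ) (hγb : γ < b) (t : ℝ) :
    IntegrableOn (fun r => C * exp (-b * (t - r)) + M * exp (-(b - γ) * (t - r))) (Iic t) :=
  ((integrableOn_exp_neg_mul_sub_Iic (by linarith) t).const_mul C).add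
    ((integrableOn_exp_neg_mul_sub_Iic (by linarith) t).const_mul M)

lemma norm_exp_smul_le_of_le_exp_neg_mul_sub {b r : ℝ} (hγ : 0 ≤ γ) (hC : 0 ≤ C) (ht : t ≤ 0)
    (hP : ‖P r‖ ≤ exp (-b * (t - r)) * (C + exp (-(γ * r)) * M)) :
    ‖exp (γ * t) • P r‖ ≤ C * exp (-b * (t - r)) + M * exp (-(b - γ) * (t - r)) := by
  have e : exp (γ * t) * exp (-b * (t - r)) * exp (-(γ * r)) = exp (-(b - γ) * (t - r)) := by
    rw [← exp_add, ← exp_add]; congr 1; ring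
  have hγt : exp (γ * t) ≤ 1 := exp_le_one_iff.2 (mul_nonpos_of_nonneg_of_nonpos hγ ht)
  calc ‖exp (γ * t) • P r‖ = exp (γ * t) * ‖P r‖ := by
        rw [norm_smul, norm_of_nonneg (exp_pos _).le]
    _ ≤ exp (γ * t) * (exp (-b * (t - r)) * (C + exp (-(γ * r)) * M)) := by gcongr
    _ = exp (γ * t) * (C * exp (-b * (t - r))) + M * exp (-(b - γ) * (t - r)) := by
        linear_combination M * e
    _ ≤ C * exp (-b * (t - r)) + M * exp (-(b - γ) * (t - r)) := by
        gcongr ?_ + _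
        exact mul_le_of_le_one_left (by positivity) hγt

lemma integrableOn_Iic_of_norm_le_exp {b : ℝ} (hγ : 0 ≤ γ) (hγb : γ < b) (hC : 0 ≤ C)
    (ht : t ≤ 0) (hPm : AEStronglyMeasurable P (volume.restrict (Iic t)))
    (hP : ∀ r ≤ t, ‖P r‖ ≤ exp (-b * (t - r)) * (C + exp (-(γ * r)) * M)) :
    IntegrableOn P (Iic t) := by
  refine (integrable_smul_iff (exp_pos (γ * t)).ne' P).1 <|
    (integrableOn_exp_neg_mul_sub_add_Iic (C := C) (M := M) hγ hγb t).mono' (hPm.const_smul _) ?_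
  exact ae_restrict_of_forall_mem measurableSet_Iic fun r hr =>
    norm_exp_smul_le_of_le_exp_neg_mul_sub hγ hC ht (hP r hr)

lemma exp_mul_norm_setIntegral_Iic_le {b : ℝ} (hγ : 0 ≤ γ) (hγb : γ < b) (hC : 0 ≤ C)
    (ht : t ≤ 0) (hP : ∀ r ≤ t, ‖P r‖ ≤ exp (-b * (t - r)) * (C + exp (-(γ * r)) * M)) :
    exp (γ * t) * ‖∫ r in Iic t, P r‖ ≤ C / b + M / (b - γ) := by
  calc exp (γ * t) * ‖∫ r in Iic t, P r‖ = ‖∫ r in Iic t, exp (γ * t) • P r‖ := by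
        rw [integral_smul, norm_smul, norm_of_nonneg (exp_pos _).le]
    _ ≤ ∫ r in Iic t, (C * exp (-b * (t - r)) + M * exp (-(b - γ) * (t - r))) :=
        norm_integral_le_of_norm_le (integrableOn_exp_neg_mul_sub_add_Iic hγ hγb t) <|
          ae_restrict_of_forall_mem measurableSet_Iic fun r hr =>
            norm_exp_smul_le_of_le_exp_neg_mul_sub hγ hC ht (hP r hr)
    _ = C / b + M / (b - γ) := by
        rw [integral_add ((integrableOn_exp_neg_mul_sub_Iic (by linarith) t).const_mul C)
          ((integrableOn_exp_neg_mul_sub_Iic (by linarith) t).const_mul M),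
          integral_const_mul, integral_const_mul, integral_exp_neg_mul_sub_Iic (by linarith),
          integral_exp_neg_mul_sub_Iic (by linarith)]
        ring

end DecayEstimates

section LyapunovPerron

variable {n : ℕ} {γ : ℝ}

lemma norm_le_exp_mul_cNorm {u : ℝ → Vec n} (hu : memCneg γ u) {t : ℝ} (ht : t ≤ 0) :
    ‖u t‖ ≤ exp (-(γ * t)) * cNorm γ u := by
  have h : exp (γ * t) * ‖u t‖ ≤ cNorm γ u := le_csSup hu.2 (mem_image_of_mem _ ht)
  rw [exp_neg, ← div_eq_inv_mul, le_div_iff₀ (exp_pos _), mul_comm]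
  exact h

lemma cNorm_nonneg {u : ℝ → Vec n} (hu : memCneg γ u) : 0 ≤ cNorm γ u :=
  (by positivity : 0 ≤ exp (γ * 0) * ‖u 0‖).trans
    (le_csSup hu.2 (mem_image_of_mem _ (mem_Iic.2 le_rfl)))

lemma norm_apply_add_le {f : Vec n → Vec n → Vec n} {L C : ℝ} (hL : 0 ≤ L)
    (hf : ∀ x y, ‖f x y‖ ≤ L * (C + ‖x‖ + ‖y‖)) {η ξ u v : ℝ → Vec n}
    (hη : memCneg γ η) (hξ : memCneg γ ξ) (hu : memCneg γ u) (hv : memCneg γ v)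
    {s : ℝ} (hs : s ≤ 0) :
    ‖f (u s + η s) (v s + ξ s)‖ ≤
      L * C + exp (-(γ * s)) * (L * (cNorm γ η + cNorm γ ξ + (cNorm γ u + cNorm γ v))) := by
  have hsum : ‖u s + η s‖ + ‖v s + ξ s‖ ≤
      exp (-(γ * s)) * (cNorm γ η + cNorm γ ξ + (cNorm γ u + cNorm γ v)) := by
    linarith [norm_add_le (u s) (η s), norm_add_le (v s) (ξ s), norm_le_exp_mul_cNorm hη hs,
      norm_le_exp_mul_cNorm hξ hs, norm_le_exp_mul_cNorm hu hs, norm_le_exp_mul_cNorm hv hs]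
  calc ‖f (u s + η s) (v s + ξ s)‖ ≤ L * (C + (‖u s + η s‖ + ‖v s + ξ s‖)) := by
        rw [← add_assoc]; exact hf _ _
    _ ≤ L * (C + exp (-(γ * s)) * (cNorm γ η + cNorm γ ξ + (cNorm γ u + cNorm γ v))) := by
        gcongr
    _ = _ := by ring

variable {A B : Matrix (Fin n) (Fin n) ℝ} {f g : Vec n → Vec n → Vec n} {η ξ u v : ℝ → Vec n}

lemma continuousOn_KA (ε : ℝ) (u₀ : Vec n)
    (hF : ContinuousOn (fun s => f (u s + η s) (v s + ξ s)) (Iic 0)) :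
    ContinuousOn (KA A ε u₀ f η ξ u v) (Iic 0) := by
  set F := fun s => f (u s + η s) (v s + ξ s)
  have hH : ContinuousOn (fun s => mApply (expM A (-(ε * s))) (F s)) (Iic 0) :=
    ((continuous_expM A).comp (by fun_prop)).continuousOn.mApply hF
  have hKA : ∀ t ∈ Iic (0 : ℝ), KA A ε u₀ f η ξ u v t =
      mApply (expM A (ε * t)) (u₀ + ε • ∫ s in (0 : ℝ)..t, mApply (expM A (-(ε * s))) (F s)) := by
    intro t ht
    have hsub : uIcc 0 t ⊆ Iic 0 := by rw [uIcc_of_ge ht]; exact Icc_subset_Iic_self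
    rw [mApply_add_smul, ← mApply_intervalIntegral _ (hH.mono hsub).intervalIntegrable]
    simp only [KA, mul_sub, mApply_expM_sub, F]
  refine ContinuousOn.congr ?_ hKA
  exact ((continuous_expM A).comp (by fun_prop)).continuousOn.mApply
    (continuousOn_const.add (hH.continuousOn_primitive_Iic.const_smul ε))

lemma norm_mApply_expM_sub_le {γB C M : ℝ}
    (hB : ∀ t ≥ (0:ℝ), ∀ y : Vec n, ‖mApply (expM B t) y‖ ≤ exp (-γB * t) * ‖y‖)
    {G : ℝ → Vec n} (hG : ∀ r ≤ (0:ℝ), ‖G r‖ ≤ C + exp (-(γ * r)) * M) {t r : ℝ} (ht : t ≤ 0)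
    (hr : r ≤ t) :
    ‖mApply (expM B (t - r)) (G r)‖ ≤ exp (-γB * (t - r)) * (C + exp (-(γ * r)) * M) :=
  (hB _ (sub_nonneg.2 hr) _).trans (mul_le_mul_of_nonneg_left (hG r (hr.trans ht)) (exp_pos _).le)

lemma continuousOn_KB {γB C M : ℝ}
    (hB : ∀ t ≥ (0:ℝ), ∀ y : Vec n, ‖mApply (expM B t) y‖ ≤ exp (-γB * t) * ‖y‖)
    (hγ : 0 ≤ γ) (hγγB : γ < γB) (hC : 0 ≤ C)
    (hGc : ContinuousOn (fun s => g (u s + η s) (v s + ξ s)) (Iic 0))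
    (hG : ∀ r ≤ (0:ℝ), ‖g (u r + η r) (v r + ξ r)‖ ≤ C + exp (-(γ * r)) * M) :
    ContinuousOn (KB B g η ξ u v) (Iic 0) := by
  set G := fun s => g (u s + η s) (v s + ξ s)
  set H := fun r => mApply (expM B (-r)) (G r)
  have hHc : ContinuousOn H (Iic 0) :=
    ((continuous_expM B).comp continuous_neg).continuousOn.mApply hGc
  have hH : IntegrableOn H (Iic 0) := by
    refine integrableOn_Iic_of_norm_le_exp (M := M) hγ hγγB hC le_rfl
      (hHc.aestronglyMeasurable measurableSet_Iic) fun r hr => ?_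
    simpa only [zero_sub] using norm_mApply_expM_sub_le hB hG le_rfl hr
  have hKB : ∀ t ∈ Iic (0 : ℝ),
      KB B g η ξ u v t = mApply (expM B t) ((∫ r in Iic 0, H r) + ∫ r in (0 : ℝ)..t, H r) := by
    intro t ht
    have hHt : IntegrableOn H (Iic t) := hH.mono_set (Iic_subset_Iic.2 ht)
    rw [← intervalIntegral.integral_Iic_sub_Iic hH hHt, add_sub_cancel,
      ← mApply_setIntegral _ hHt]
    simp only [KB, mApply_expM_sub, H, G]
  refine ContinuousOn.congr ?_ hKB
  exact (continuous_expM B).continuousOn.mApply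
    (continuousOn_const.add hHc.continuousOn_primitive_Iic)

lemma exp_mul_norm_KB_le {γB C M : ℝ}
    (hB : ∀ t ≥ (0:ℝ), ∀ y : Vec n, ‖mApply (expM B t) y‖ ≤ exp (-γB * t) * ‖y‖)
    (hγ : 0 ≤ γ) (hγγB : γ < γB) (hC : 0 ≤ C)
    (hG : ∀ r ≤ (0:ℝ), ‖g (u r + η r) (v r + ξ r)‖ ≤ C + exp (-(γ * r)) * M)
    {t : ℝ} (ht : t ≤ 0) :
    exp (γ * t) * ‖KB B g η ξ u v t‖ ≤ C / γB + M / (γB - γ) :=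
  exp_mul_norm_setIntegral_Iic_le hγ hγγB hC ht fun _ hr => norm_mApply_expM_sub_le hB hG ht hr

lemma exp_mul_norm_KA_le {γA' ε C M : ℝ}
    (hA : ∀ t ≤ (0:ℝ), ∀ x : Vec n, ‖mApply (expM A t) x‖ ≤ exp (-γA' * t) * ‖x‖)
    (hγA' : 0 < γA') (hε : 0 < ε) (hεγ : ε * γA' < γ) (hC : 0 ≤ C) (hM : 0 ≤ M)
    (hF : ∀ s ≤ (0:ℝ), ‖f (u s + η s) (v s + ξ s)‖ ≤ C + exp (-(γ * s)) * M)
    (u₀ : Vec n) {t : ℝ} (ht : t ≤ 0) :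
    exp (γ * t) * ‖KA A ε u₀ f η ξ u v t‖ ≤ ‖u₀‖ + C / γA' + ε * M / (γ - ε * γA') := by
  have hrate : ∀ τ, -γA' * (ε * τ) = -(ε * γA') * τ := fun τ => by ring
  have hu₀ : exp (γ * t) * ‖mApply (expM A (ε * t)) u₀‖ ≤ ‖u₀‖ := by
    have hdecay : exp (γ * t) * exp (-(ε * γA') * t) ≤ 1 := by
      rw [← exp_add, exp_le_one_iff]; nlinarith
    calc exp (γ * t) * ‖mApply (expM A (ε * t)) u₀‖
        ≤ exp (γ * t) * (exp (-(ε * γA') * t) * ‖u₀‖) := by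
          gcongr; rw [← hrate]; exact hA _ (mul_nonpos_of_nonneg_of_nonpos hε.le ht) _
      _ ≤ ‖u₀‖ := by rw [← mul_assoc]; exact mul_le_of_le_one_left (norm_nonneg _) hdecay
  have hint : exp (γ * t) *
      ‖∫ s in t..0, mApply (expM A (ε * (t - s))) (f (u s + η s) (v s + ξ s))‖ ≤
        C / (ε * γA') + M / (γ - ε * γA') := by
    refine exp_mul_norm_intervalIntegral_le (by positivity) hεγ hC hM ht fun s hs => ?_
    rw [← hrate]
    refine (hA _ (mul_nonpos_of_nonneg_of_nonpos hε.le (by linarith [hs.1])) _).trans ?_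
    gcongr
    exact hF s hs.2
  calc exp (γ * t) * ‖KA A ε u₀ f η ξ u v t‖
      ≤ exp (γ * t) * ‖mApply (expM A (ε * t)) u₀‖ + ε * (exp (γ * t) *
          ‖∫ s in t..0, mApply (expM A (ε * (t - s))) (f (u s + η s) (v s + ξ s))‖) := by
        rw [KA, intervalIntegral.integral_symm t 0, smul_neg, ← sub_eq_add_neg, mul_left_comm,
          ← norm_smul_of_nonneg hε.le, ← mul_add]
        gcongr
        exact norm_sub_le _ _
    _ ≤ ‖u₀‖ + ε * (C / (ε * γA') + M / (γ - ε * γA')) := by gcongr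
    _ = ‖u₀‖ + C / γA' + ε * M / (γ - ε * γA') := by field_simp; ring

end LyapunovPerron

theorem statement2_general
    (n : ℕ)
    (A B : Matrix (Fin n) (Fin n) ℝ) (γA' γB : ℝ) (hγA' : 0 < γA')
    (hA : ∀ t ≤ (0:ℝ), ∀ x : Vec n, ‖mApply (expM A t) x‖ ≤ Real.exp (-γA' * t) * ‖x‖)
    (hB : ∀ t ≥ (0:ℝ), ∀ y : Vec n, ‖mApply (expM B t) y‖ ≤ Real.exp (-γB * t) * ‖y‖)
    (γ ε : ℝ) (hγ : 0 < γ) (hγγB : γ < γB) (hε : 0 < ε) (hεγ : ε * γA' < γ)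
    (f g : Vec n → Vec n → Vec n) (Lf Lg Cf Cg : ℝ)
    (hLf : 0 < Lf) (hLg : 0 < Lg) (hCf : 0 < Cf) (hCg : 0 < Cg)
    (hfLip : ∀ x₁ y₁ x₂ y₂ : Vec n,
      ‖f x₁ y₁ - f x₂ y₂‖ ≤ Lf * (‖x₁ - x₂‖ + ‖y₁ - y₂‖))
    (hgLip : ∀ x₁ y₁ x₂ y₂ : Vec n,
      ‖g x₁ y₁ - g x₂ y₂‖ ≤ Lg * (‖x₁ - x₂‖ + ‖y₁ - y₂‖))
    (hfGrow : ∀ x y : Vec n, ‖f x y‖ ≤ Lf * (Cf + ‖x‖ + ‖y‖))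
    (hgGrow : ∀ x y : Vec n, ‖g x y‖ ≤ Lg * (Cg + ‖x‖ + ‖y‖))
    (η ξ : ℝ → Vec n) (hη : memCneg γ η) (hξ : memCneg γ ξ)
    (u₀ : Vec n) (u v : ℝ → Vec n) (hu : memCneg γ u) (hv : memCneg γ v) :
    memCneg γ (KA A ε u₀ f η ξ u v) ∧ memCneg γ (KB B g η ξ u v) ∧
      ∀ t ≤ (0:ℝ), ∀ s ≤ (0:ℝ),
        Real.exp (γ * t) * ‖KA A ε u₀ f η ξ u v t‖ +
            Real.exp (γ * s) * ‖KB B g η ξ u v s‖ ≤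
          (‖u₀‖ + Lf * Cf / γA' + Lg * Cg / γB +
              (ε * Lf / (γ - ε * γA') + Lg / (γB - γ)) * (cNorm γ η + cNorm γ ξ)) +
            (ε * Lf / (γ - ε * γA') + Lg / (γB - γ)) * (cNorm γ u + cNorm γ v) := by
  have hM : 0 ≤ cNorm γ η + cNorm γ ξ + (cNorm γ u + cNorm γ v) :=
    add_nonneg (add_nonneg (cNorm_nonneg hη) (cNorm_nonneg hξ))
      (add_nonneg (cNorm_nonneg hu) (cNorm_nonneg hv))
  have hF := fun s (hs : s ≤ 0) => norm_apply_add_le hLf.le hfGrow hη hξ hu hv hs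
  have hG := fun s (hs : s ≤ 0) => norm_apply_add_le hLg.le hgGrow hη hξ hu hv hs
  have hFc := (continuous_uncurry_of_norm_sub_le hfLip).comp_continuousOn
    ((hu.1.add hη.1).prodMk (hv.1.add hξ.1))
  have hGc := (continuous_uncurry_of_norm_sub_le hgLip).comp_continuousOn
    ((hu.1.add hη.1).prodMk (hv.1.add hξ.1))
  have hKA := fun t (ht : t ≤ 0) =>
    exp_mul_norm_KA_le hA hγA' hε hεγ (by positivity) (by positivity) hF u₀ ht
  have hKB := fun t (ht : t ≤ 0) => exp_mul_norm_KB_le hB hγ.le hγγB (by positivity) hG ht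
  refine ⟨⟨continuousOn_KA ε u₀ hFc, _, forall_mem_image.2 hKA⟩,
    ⟨continuousOn_KB hB hγ.le hγγB (by positivity) hGc hG, _, forall_mem_image.2 hKB⟩,
    fun t ht s hs => (add_le_add (hKA t ht) (hKB s hs)).trans_eq (by ring)⟩

/-- the Lyapunov–Perron map `K^ε` maps `C_γ^-` into itself, with norm bound
`‖K^ε(Φ)‖_γ^- ≤ C₀ + ρ(ε) ‖Φ‖_γ^-`. -/
theorem statement2
    (n : ℕ) (hn : 0 < n)
    (A B : Matrix (Fin n) (Fin n) ℝ) (γA' γB : ℝ) (hγA' : 0 < γA') (hγB : 0 < γB)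
    (hA : ∀ t ≤ (0:ℝ), ∀ x : Vec n, ‖mApply (expM A t) x‖ ≤ Real.exp (-γA' * t) * ‖x‖)
    (hB : ∀ t ≥ (0:ℝ), ∀ y : Vec n, ‖mApply (expM B t) y‖ ≤ Real.exp (-γB * t) * ‖y‖)
    (γ ε : ℝ) (hγ : 0 < γ) (hγγB : γ < γB) (hε : 0 < ε) (hεγ : ε * γA' < γ)
    (f g : Vec n → Vec n → Vec n) (Lf Lg Cf Cg : ℝ)
    (hLf : 0 < Lf) (hLg : 0 < Lg) (hCf : 0 < Cf) (hCg : 0 < Cg)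
    (hfLip : ∀ x₁ y₁ x₂ y₂ : Vec n,
      ‖f x₁ y₁ - f x₂ y₂‖ ≤ Lf * (‖x₁ - x₂‖ + ‖y₁ - y₂‖))
    (hgLip : ∀ x₁ y₁ x₂ y₂ : Vec n,
      ‖g x₁ y₁ - g x₂ y₂‖ ≤ Lg * (‖x₁ - x₂‖ + ‖y₁ - y₂‖))
    (hfGrow : ∀ x y : Vec n, ‖f x y‖ ≤ Lf * (Cf + ‖x‖ + ‖y‖))
    (hgGrow : ∀ x y : Vec n, ‖g x y‖ ≤ Lg * (Cg + ‖x‖ + ‖y‖))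
    (η ξ : ℝ → Vec n) (hη : memCneg γ η) (hξ : memCneg γ ξ)
    (u₀ : Vec n) (u v : ℝ → Vec n) (hu : memCneg γ u) (hv : memCneg γ v) :
    memCneg γ (KA A ε u₀ f η ξ u v) ∧ memCneg γ (KB B g η ξ u v) ∧
      ∀ t ≤ (0:ℝ), ∀ s ≤ (0:ℝ),
        Real.exp (γ * t) * ‖KA A ε u₀ f η ξ u v t‖ +
            Real.exp (γ * s) * ‖KB B g η ξ u v s‖ ≤
          (‖u₀‖ + Lf * Cf / γA' + Lg * Cg / γB +
              (ε * Lf / (γ - ε * γA') + Lg / (γB - γ)) * (cNorm γ η + cNorm γ ξ)) +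
            (ε * Lf / (γ - ε * γA') + Lg / (γB - γ)) * (cNorm γ u + cNorm γ v) :=
  statement2_general n A B γA' γB hγA' hA hB γ ε hγ hγγB hε hεγ f g Lf Lg Cf Cg hLf hLg hCf hCg
    hfLip hgLip hfGrow hgGrow η ξ hη hξ u₀ u v hu hv
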